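/- Under the second-order self-bounding assumption and the third-order self-bounding assumption, fix w0 ∈ E, set L1(w0) = max{1, ρ0(F(w0)+1), ρ0(F(w0))·ρ0(F(w0)+1), ρ1(F(w0)+1)} and L2(w0) = max{1, L1(w0), ρ2(F(w0)+1)}. Then for every w̃ ∈ E with F(w̃) ≤ F(w0) and all u1, u2 ∈ E with ‖u1 − w̃‖ ≤ 1/ρ0(F(w0)+1) and ‖u2 − w̃‖ ≤ 1/ρ0(F(w0)+1), one has ‖∇²F(u1) − ∇²F(u2)‖_op ≤ L2(w0)·‖u1 − u2‖. -/

import Mathlib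

/-- `θ(x) = ∫₀ˣ 1/ρ1(v) dv`. -/
noncomputable def sbTheta (ρ1 : ℝ → ℝ) (x : ℝ) : ℝ := ∫ v in (0 : ℝ)..x, 1 / ρ1 v

/-- `ρ0(x) = ρ1(x)·√(2 θ(x))`. -/
noncomputable def sbRho0 (ρ1 : ℝ → ℝ) (x : ℝ) : ℝ := ρ1 x * Real.sqrt (2 * sbTheta ρ1 x)

/-!
Along a line `φ(t) = F(w + t v)` with `‖v‖ = 1`, the second-order assumption says `φ'' ≤ ρ1(φ)`.
If `φ'(0) = -g < 0` and `M > φ(0)`, then `φ` keeps decreasing, hence stays below `M`, up to time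
`g / ρ1(M)`, by which it would have dropped by `g² / (2 ρ1(M))`; nonnegativity of `φ` and
`M → φ(0)` give `‖∇F‖² ≤ 2 ρ1(F) F`, hence `‖∇F‖ ≤ ρ0(Y)` on the sublevel set `{F ≤ Y}`.
The same continuity argument, now with slope at most `ρ0(F(w0)+1)`, keeps `F ≤ F(w0) + 1` on the
ball of radius `1 / ρ0(F(w0)+1)` around `w̃`. There the third-order assumption makes the Hessian
`ρ2(F(w0)+1)`-Lipschitz at scale `δ0`, and chaining along the segment `[u1, u2]`, which stays in
the ball by convexity, removes the restriction to scale `δ0`.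
-/

open Set

theorem sub_le_mul_sub_of_hasDerivAt_le {f f' : ℝ → ℝ} (hf : ∀ x, HasDerivAt f (f' x) x)
    {a b C : ℝ} (hab : a ≤ b) (hle : ∀ x ∈ Icc a b, f' x ≤ C) : f b - f a ≤ C * (b - a) :=
  (convex_Icc a b).image_sub_le_mul_sub_of_deriv_le
    (fun x _ => (hf x).continuousAt.continuousWithinAt)
    (fun x _ => (hf x).differentiableAt.differentiableWithinAt)
    (fun x hx => (hf x).deriv ▸ hle x (interior_subset hx)) a (left_mem_Icc.2 hab) b
    (right_mem_Icc.2 hab) hab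

theorem forall_Icc_le_of_bootstrap {φ : ℝ → ℝ} {a b M : ℝ} (hφ : ContinuousOn φ (Icc a b))
    (ha : φ a ≤ M) (H : ∀ t ∈ Ico a b, (∀ s ∈ Icc a t, φ s ≤ M) → φ t < M) :
    ∀ t ∈ Icc a b, φ t ≤ M := by
  have hlt : ∀ t ∈ Ico a b, φ t < M := by
    intro t ht
    by_contra! hMt
    have hZ : IsCompact (Icc a t ∩ φ ⁻¹' Ici M) :=
      isCompact_Icc.of_isClosed_subset
        ((hφ.mono (Icc_subset_Icc_right ht.2.le)).preimage_isClosed_of_isClosed isClosed_Icc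
          isClosed_Ici) inter_subset_left
    obtain ⟨τ, ⟨hτ, hMτ⟩, hτmin⟩ :=
      hZ.exists_isLeast ⟨t, right_mem_Icc.2 ht.1, hMt⟩
    have hτb : τ ∈ Ico a b := ⟨hτ.1, hτ.2.trans_lt ht.2⟩
    have hφa : φ a < M := H a ⟨le_rfl, ht.1.trans_lt ht.2⟩ fun s hs => by
      rwa [le_antisymm hs.2 hs.1]
    -- `φ τ = M`: by the intermediate value theorem `φ` takes the value `M` on `[a, τ]`
    obtain ⟨σ, hσ, hφσ⟩ := intermediate_value_Icc hτ.1
      (hφ.mono (Icc_subset_Icc_right hτb.2.le)) ⟨hφa.le, hMτ⟩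
    have hστ : σ = τ := le_antisymm hσ.2
      (hτmin ⟨⟨hσ.1, hσ.2.trans hτ.2⟩, (show M ≤ φ σ from hφσ.ge)⟩)
    refine (H τ hτb fun s hs => ?_).not_ge hMτ
    rcases hs.2.lt_or_eq with hsτ | rfl
    · by_contra! hMs
      exact (hτmin ⟨⟨hs.1, hs.2.trans hτ.2⟩, hMs.le⟩).not_gt hsτ
    · exact hστ ▸ hφσ.le
  intro t ht
  rcases ht.2.lt_or_eq with htb | rfl
  · exact (hlt t ⟨ht.1, htb⟩).le
  rcases ht.1.eq_or_lt with rfl | hab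
  · exact ha
  exact ContinuousWithinAt.closure_le (by rw [closure_Ico hab.ne]; exact ht)
    ((hφ t ht).mono Ico_subset_Icc_self) continuousWithinAt_const fun s hs => (hlt s hs).le

theorem le_of_deriv_le_while_le {φ φ' : ℝ → ℝ} (hφ : ∀ t, HasDerivAt φ (φ' t) t)
    {M c T : ℝ} (hc : 0 < c) (hT : 0 ≤ T) (hM : φ 0 + c * T ≤ M)
    (hφ' : ∀ t, φ t ≤ M → φ' t ≤ c) : φ T ≤ M := by
  refine forall_Icc_le_of_bootstrap (fun t _ => (hφ t).continuousAt.continuousWithinAt)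
    (by nlinarith) (fun t ht hle => ?_) T (right_mem_Icc.2 hT)
  have := sub_le_mul_sub_of_hasDerivAt_le hφ ht.1 fun s hs => hφ' s (hle s hs)
  nlinarith [ht.2]

theorem sq_deriv_le_of_second_deriv_le_while_le {φ φ' φ'' : ℝ → ℝ}
    (hφ : ∀ t, HasDerivAt φ (φ' t) t) (hφ' : ∀ t, HasDerivAt φ' (φ'' t) t)
    (hnn : ∀ t, 0 ≤ φ t) {M B : ℝ} (hB : 0 < B) (hM : φ 0 < M) (hdesc : φ' 0 ≤ 0)
    (hφ'' : ∀ t, φ t ≤ M → φ'' t ≤ B) : φ' 0 ^ 2 ≤ 2 * B * φ 0 := by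
  set T := -φ' 0 / B
  have hT : 0 ≤ T := div_nonneg (neg_nonneg.2 hdesc) hB.le
  have hBT : B * T = -φ' 0 := mul_div_cancel₀ _ hB.ne'
  have hslope : ∀ t, (∀ s ∈ Icc 0 t, φ s ≤ M) → ∀ s ∈ Icc 0 t, φ' s ≤ φ' 0 + B * s :=
    fun t hle s hs => by
      have := sub_le_mul_sub_of_hasDerivAt_le hφ' hs.1 fun r hr =>
        hφ'' r (hle r ⟨hr.1, hr.2.trans hs.2⟩)
      linarith
  -- `φ` decreases on `[0, T]` as long as it stays below `M`, so it never reaches `M` there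
  have hbelow : ∀ t ∈ Icc 0 T, φ t ≤ M :=
    forall_Icc_le_of_bootstrap (fun t _ => (hφ t).continuousAt.continuousWithinAt) hM.le
      fun t ht hle => by
        have := sub_le_mul_sub_of_hasDerivAt_le (C := 0) hφ ht.1 fun s hs => by
          nlinarith [hslope t hle s hs, hs.2, ht.2]
        linarith
  have hquad : φ T - φ' 0 * T - B * T ^ 2 / 2 - (φ 0 - φ' 0 * 0 - B * 0 ^ 2 / 2) ≤ 0 * (T - 0) :=
    sub_le_mul_sub_of_hasDerivAt_le
      (fun t => (((hφ t).sub ((hasDerivAt_id t).const_mul (φ' 0))).sub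
        (((hasDerivAt_pow 2 t).const_mul B).div_const 2)))
      hT fun s hs => by
        have := hslope T hbelow s hs
        nlinarith
  nlinarith [hnn T]

theorem sq_deriv_le_of_second_deriv_le_selfBounded {φ φ' φ'' ρ : ℝ → ℝ}
    (hφ : ∀ t, HasDerivAt φ (φ' t) t) (hφ' : ∀ t, HasDerivAt φ' (φ'' t) t)
    (hnn : ∀ t, 0 ≤ φ t) (hρmono : MonotoneOn ρ (Ici 0)) (hρcont : ContinuousOn ρ (Ici 0))
    (hρpos : ∀ x ∈ Ici (0 : ℝ), 0 < ρ x) (hφ'' : ∀ t, φ'' t ≤ ρ (φ t)) (hdesc : φ' 0 ≤ 0) :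
    φ' 0 ^ 2 ≤ 2 * ρ (φ 0) * φ 0 := by
  have hshift : ∀ δ ∈ Ioi (0 : ℝ), φ' 0 ^ 2 ≤ 2 * ρ (φ 0 + δ) * φ 0 := fun δ hδ =>
    sq_deriv_le_of_second_deriv_le_while_le hφ hφ' hnn
      (hρpos _ (add_nonneg (hnn 0) (le_of_lt hδ))) (lt_add_of_pos_right _ hδ) hdesc
      fun t ht => (hφ'' t).trans (hρmono (hnn t) (add_nonneg (hnn 0) (le_of_lt hδ)) ht)
  -- let `δ → 0⁺`, using the right-continuity of `ρ` at `φ 0`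
  have hcont : ContinuousWithinAt (fun δ => 2 * ρ (φ 0 + δ) * φ 0) (Ioi 0) 0 := by
    refine (continuousWithinAt_const.mul ?_).mul continuousWithinAt_const
    exact (hρcont.continuousWithinAt (x := φ 0 + 0) (by simpa using hnn 0)).comp
      (by fun_prop) fun δ hδ => add_nonneg (hnn 0) (le_of_lt hδ)
  simpa using ContinuousWithinAt.closure_le (by simp) continuousWithinAt_const hcont hshift

theorem div_le_sbTheta {ρ : ℝ → ℝ} (hρmono : MonotoneOn ρ (Ici 0))
    (hρcont : ContinuousOn ρ (Ici 0)) (hρpos : ∀ x ∈ Ici (0 : ℝ), 0 < ρ x) {x : ℝ}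
    (hx : 0 ≤ x) : x / ρ x ≤ sbTheta ρ x := by
  have hmono : ∫ _ in (0 : ℝ)..x, 1 / ρ x ≤ ∫ v in (0 : ℝ)..x, 1 / ρ v :=
    intervalIntegral.integral_mono_on hx intervalIntegrable_const
      ((continuousOn_const.div (hρcont.mono Icc_subset_Ici_self)
        fun v hv => (hρpos v hv.1).ne').intervalIntegrable_of_Icc hx)
      fun v hv => one_div_le_one_div_of_le (hρpos v hv.1) (hρmono hv.1 hx hv.2)
  simpa [sbTheta, div_eq_mul_one_div x] using hmono

theorem sqrt_two_mul_le_sbRho0 {ρ : ℝ → ℝ} (hρmono : MonotoneOn ρ (Ici 0))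
    (hρcont : ContinuousOn ρ (Ici 0)) (hρpos : ∀ x ∈ Ici (0 : ℝ), 0 < ρ x) {x : ℝ}
    (hx : 0 ≤ x) : √(2 * ρ x * x) ≤ sbRho0 ρ x := by
  have hρx := hρpos x hx
  have hθ : x ≤ ρ x * sbTheta ρ x := by
    have := div_le_sbTheta hρmono hρcont hρpos hx
    rwa [div_le_iff₀' hρx] at this
  have hθnn : 0 ≤ sbTheta ρ x := nonneg_of_mul_nonneg_right (hx.trans hθ) hρx
  rw [Real.sqrt_le_iff, sbRho0, mul_pow, Real.sq_sqrt (by positivity)]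
  exact ⟨by positivity, by nlinarith⟩

section NormedSpace

variable {E : Type*} [NormedAddCommGroup E] [NormedSpace ℝ E]

theorem hasDerivAt_comp_add_smul {G : Type*} [NormedAddCommGroup G] [NormedSpace ℝ G]
    {f : E → G} {x v : E} {t : ℝ} (hf : DifferentiableAt ℝ f (x + t • v)) :
    HasDerivAt (fun s : ℝ => f (x + s • v)) (fderiv ℝ f (x + t • v) v) t := by
  have hline : HasDerivAt (fun s : ℝ => x + s • v) v t := by
    simpa using ((hasDerivAt_id t).smul_const v).const_add x
  exact hf.hasFDerivAt.comp_hasDerivAt t hline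

theorem norm_fderiv_le_sqrt_of_selfBounded {F : E → ℝ} (hF : ContDiff ℝ 2 F)
    (hFnn : ∀ w, 0 ≤ F w) {ρ : ℝ → ℝ} (hρmono : MonotoneOn ρ (Ici 0))
    (hρcont : ContinuousOn ρ (Ici 0)) (hρpos : ∀ x ∈ Ici (0 : ℝ), 0 < ρ x)
    (hρbound : ∀ w, ‖fderiv ℝ (fderiv ℝ F) w‖ ≤ ρ (F w)) (w : E) :
    ‖fderiv ℝ F w‖ ≤ √(2 * ρ (F w) * F w) := by
  have hF' : ContDiff ℝ 1 (fderiv ℝ F) := hF.fderiv_right (by norm_num)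
  have hsecond : ∀ v : E, ‖v‖ = 1 → ∀ u, fderiv ℝ (fderiv ℝ F) u v v ≤ ρ (F u) := fun v hv u =>
    calc fderiv ℝ (fderiv ℝ F) u v v ≤ ‖fderiv ℝ (fderiv ℝ F) u‖ * ‖v‖ * ‖v‖ :=
          (Real.le_norm_self _).trans ((fderiv ℝ (fderiv ℝ F) u).le_opNorm₂ v v)
      _ ≤ ρ (F u) := by simpa [hv] using hρbound u
  have hdesc : ∀ v : E, ‖v‖ = 1 → fderiv ℝ F w v ≤ 0 →
      fderiv ℝ F w v ^ 2 ≤ 2 * ρ (F w) * F w := fun v hv hdesc => by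
    simpa using sq_deriv_le_of_second_deriv_le_selfBounded (φ := fun t => F (w + t • v))
      (fun t => hasDerivAt_comp_add_smul (hF.differentiable (by norm_num) _))
      (fun t => by
        simpa using (hasDerivAt_comp_add_smul (hF'.differentiable one_ne_zero _)).clm_apply
          (hasDerivAt_const t v))
      (fun t => hFnn _) hρmono hρcont hρpos
      (fun t => hsecond v hv _)
      (by simpa using hdesc)
  refine ContinuousLinearMap.opNorm_le_of_unit_norm (Real.sqrt_nonneg _) fun v hv => ?_
  rw [Real.norm_eq_abs]
  refine Real.abs_le_sqrt ?_
  rcases le_total (fderiv ℝ F w v) 0 with h | h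
  · exact hdesc v hv h
  · simpa using hdesc (-v) (by simpa using hv) (by simpa using h)

theorem norm_fderiv_le_sbRho0 {F : E → ℝ} (hF : ContDiff ℝ 2 F) (hFnn : ∀ w, 0 ≤ F w)
    {ρ : ℝ → ℝ} (hρmono : MonotoneOn ρ (Ici 0)) (hρcont : ContinuousOn ρ (Ici 0))
    (hρpos : ∀ x ∈ Ici (0 : ℝ), 0 < ρ x) (hρbound : ∀ w, ‖fderiv ℝ (fderiv ℝ F) w‖ ≤ ρ (F w))
    {u : E} {Y : ℝ} (hu : F u ≤ Y) : ‖fderiv ℝ F u‖ ≤ sbRho0 ρ Y := by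
  have hY : 0 ≤ Y := (hFnn u).trans hu
  have hρ : ρ (F u) ≤ ρ Y := hρmono (hFnn u) hY hu
  have hρY := hρpos Y hY
  calc ‖fderiv ℝ F u‖ ≤ √(2 * ρ (F u) * F u) :=
        norm_fderiv_le_sqrt_of_selfBounded hF hFnn hρmono hρcont hρpos hρbound u
    _ ≤ √(2 * ρ Y * Y) := Real.sqrt_le_sqrt (by gcongr; exact hFnn u)
    _ ≤ sbRho0 ρ Y := sqrt_two_mul_le_sbRho0 hρmono hρcont hρpos hY

theorem le_of_norm_fderiv_le_while_le {F : E → ℝ} (hF : Differentiable ℝ F) {M C : ℝ}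
    (hgrad : ∀ u, F u ≤ M → ‖fderiv ℝ F u‖ ≤ C) {x y : E} (hx : F x < M)
    (hxy : C * ‖y - x‖ ≤ M - F x) : F y ≤ M := by
  simpa using le_of_deriv_le_while_le (φ := fun t : ℝ => F (x + t • (y - x)))
    (fun t => hasDerivAt_comp_add_smul (hF _)) (sub_pos.2 hx) zero_le_one (by simp)
    fun t ht => calc
      fderiv ℝ F (x + t • (y - x)) (y - x) ≤ ‖fderiv ℝ F (x + t • (y - x))‖ * ‖y - x‖ :=
        (Real.le_norm_self _).trans (ContinuousLinearMap.le_opNorm _ _)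
      _ ≤ C * ‖y - x‖ := by gcongr; exact hgrad _ ht
      _ ≤ M - F x := hxy

theorem le_add_one_of_norm_sub_le {F : E → ℝ} (hF : ContDiff ℝ 2 F) (hFnn : ∀ w, 0 ≤ F w)
    {ρ : ℝ → ℝ} (hρmono : MonotoneOn ρ (Ici 0)) (hρcont : ContinuousOn ρ (Ici 0))
    (hρpos : ∀ x ∈ Ici (0 : ℝ), 0 < ρ x) (hρbound : ∀ w, ‖fderiv ℝ (fderiv ℝ F) w‖ ≤ ρ (F w))
    {x u : E} {Y : ℝ} (hx : F x ≤ Y) (hu : ‖u - x‖ ≤ 1 / sbRho0 ρ (Y + 1)) : F u ≤ Y + 1 := by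
  have hρ := hρpos (Y + 1) (mem_Ici.2 (by linarith [hFnn x]))
  have hC : 0 ≤ sbRho0 ρ (Y + 1) := by unfold sbRho0; positivity
  refine le_of_norm_fderiv_le_while_le (hF.differentiable two_ne_zero)
    (fun v hv => norm_fderiv_le_sbRho0 hF hFnn hρmono hρcont hρpos hρbound hv) (by linarith) ?_
  calc sbRho0 ρ (Y + 1) * ‖u - x‖ ≤ sbRho0 ρ (Y + 1) * (1 / sbRho0 ρ (Y + 1)) := by gcongr
    _ ≤ 1 := by rw [mul_one_div]; exact div_self_le_one _
    _ ≤ Y + 1 - F x := by linarith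

theorem Convex.norm_sub_le_of_local_lipschitz {G : Type*} [NormedAddCommGroup G] {s : Set E}
    (hs : Convex ℝ s) {f : E → G} {K δ : ℝ} (hδ : 0 < δ)
    (hf : ∀ x ∈ s, ∀ y ∈ s, ‖x - y‖ ≤ δ → ‖f x - f y‖ ≤ K * ‖x - y‖) {x y : E} (hx : x ∈ s)
    (hy : y ∈ s) : ‖f x - f y‖ ≤ K * ‖x - y‖ := by
  -- cut the segment `[x, y]` into `n` pieces of length at most `δ`
  set n := ⌈‖x - y‖ / δ⌉₊ + 1
  have hn : (0 : ℝ) < n := by positivity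
  set p : ℕ → E := fun i => x + ((i : ℝ) / n) • (y - x)
  have hp : ∀ i ≤ n, p i ∈ s := fun i hi =>
    hs.add_smul_sub_mem hx hy ⟨by positivity, div_le_one_of_le₀ (by exact_mod_cast hi) hn.le⟩
  have hstep : ∀ i, ‖p i - p (i + 1)‖ = ‖x - y‖ / n := fun i => by
    have : p i - p (i + 1) = (1 / (n : ℝ)) • (x - y) := by
      simp only [p]
      push_cast
      module
    rw [this, norm_smul, Real.norm_of_nonneg (by positivity), one_div_mul_eq_div]
  have hstep_le : ‖x - y‖ / n ≤ δ := by
    rw [div_le_iff₀ hn]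
    have := Nat.le_ceil (‖x - y‖ / δ)
    rw [div_le_iff₀ hδ] at this
    push_cast [n]
    nlinarith
  calc ‖f x - f y‖ = dist (f (p 0)) (f (p n)) := by simp [p, dist_eq_norm, hn.ne']
    _ ≤ ∑ i ∈ Finset.range n, dist (f (p i)) (f (p (i + 1))) :=
        dist_le_range_sum_dist (fun i => f (p i)) n
    _ ≤ ∑ _i ∈ Finset.range n, K * (‖x - y‖ / n) := Finset.sum_le_sum fun i hi => by
        have hi : i < n := Finset.mem_range.1 hi
        rw [dist_eq_norm, ← hstep i]
        exact hf _ (hp i hi.le) _ (hp (i + 1) hi) (hstep i ▸ hstep_le)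
    _ = K * ‖x - y‖ := by
        rw [Finset.sum_const, Finset.card_range, nsmul_eq_mul]
        field_simp

end NormedSpace

theorem local_hessian_lipschitz_of_selfbounding_general (d : ℕ)
    (F : EuclideanSpace ℝ (Fin d) → ℝ)
    (hF : ContDiff ℝ 2 F) (hFnn : ∀ w, 0 ≤ F w)
    (ρ1 : ℝ → ℝ) (hρ1mono : MonotoneOn ρ1 (Set.Ici 0))
    (hρ1cont : ContinuousOn ρ1 (Set.Ici 0))
    (hρ1pos : ∀ x ∈ Set.Ici (0 : ℝ), 0 < ρ1 x)
    (hρ1bound : ∀ w, ‖fderiv ℝ (fderiv ℝ F) w‖ ≤ ρ1 (F w))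
    (δ0 : ℝ) (hδ0 : 0 < δ0)
    (ρ2 : ℝ → ℝ) (hρ2mono : MonotoneOn ρ2 (Set.Ici 0))
    (hρ2lip : ∀ w w' : EuclideanSpace ℝ (Fin d), ‖w - w'‖ ≤ δ0 →
      ‖fderiv ℝ (fderiv ℝ F) w - fderiv ℝ (fderiv ℝ F) w'‖ ≤ ρ2 (F w) * ‖w - w'‖)
    (w0 : EuclideanSpace ℝ (Fin d)) (L1w0 L2w0 : ℝ)
    (hL2w0 : L2w0 = max (max 1 L1w0) (ρ2 (F w0 + 1))) :
    ∀ wt : EuclideanSpace ℝ (Fin d), F wt ≤ F w0 →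
      ∀ u1 u2 : EuclideanSpace ℝ (Fin d),
        ‖u1 - wt‖ ≤ 1 / sbRho0 ρ1 (F w0 + 1) →
        ‖u2 - wt‖ ≤ 1 / sbRho0 ρ1 (F w0 + 1) →
        ‖fderiv ℝ (fderiv ℝ F) u1 - fderiv ℝ (fderiv ℝ F) u2‖ ≤ L2w0 * ‖u1 - u2‖ := by
  intro wt hwt u1 u2 hu1 hu2
  set B := Metric.closedBall wt (1 / sbRho0 ρ1 (F w0 + 1))
  have hsublevel : ∀ u ∈ B, F u ≤ F w0 + 1 := fun u hu =>
    le_add_one_of_norm_sub_le hF hFnn hρ1mono hρ1cont hρ1pos hρ1bound hwt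
      (mem_closedBall_iff_norm.1 hu)
  have hlocal : ∀ x ∈ B, ∀ y ∈ B, ‖x - y‖ ≤ δ0 →
      ‖fderiv ℝ (fderiv ℝ F) x - fderiv ℝ (fderiv ℝ F) y‖ ≤ ρ2 (F w0 + 1) * ‖x - y‖ :=
    fun x hx y _ hxy => (hρ2lip x y hxy).trans <| by
      gcongr
      exact hρ2mono (hFnn x) (mem_Ici.2 (by linarith [hFnn w0])) (hsublevel x hx)
  calc ‖fderiv ℝ (fderiv ℝ F) u1 - fderiv ℝ (fderiv ℝ F) u2‖ ≤ ρ2 (F w0 + 1) * ‖u1 - u2‖ :=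
        (convex_closedBall _ _).norm_sub_le_of_local_lipschitz (f := fderiv ℝ (fderiv ℝ F))
          hδ0 hlocal (mem_closedBall_iff_norm.2 hu1) (mem_closedBall_iff_norm.2 hu2)
    _ ≤ L2w0 * ‖u1 - u2‖ := by
        rw [hL2w0]
        gcongr
        exact le_max_right _ _

/-- Under the second- and third-order self-bounding assumptions, the Hessian of `F` is
`L2(w0)`-Lipschitz on the ball of radius `1/ρ0(F(w0)+1)` around any point of the
`F(w0)`-sublevel set. -/
theorem local_hessian_lipschitz_of_selfbounding (d : ℕ) (hd : 1 ≤ d)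
    (F : EuclideanSpace ℝ (Fin d) → ℝ)
    (hF : ContDiff ℝ 2 F) (hFnn : ∀ w, 0 ≤ F w)
    (ρ1 : ℝ → ℝ) (hρ1mono : MonotoneOn ρ1 (Set.Ici 0))
    (hρ1cont : ContinuousOn ρ1 (Set.Ici 0))
    (hρ1pos : ∀ x ∈ Set.Ici (0 : ℝ), 0 < ρ1 x)
    (hρ1bound : ∀ w, ‖fderiv ℝ (fderiv ℝ F) w‖ ≤ ρ1 (F w))
    (δ0 : ℝ) (hδ0 : 0 < δ0)
    (ρ2 : ℝ → ℝ) (hρ2mono : MonotoneOn ρ2 (Set.Ici 0))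
    (hρ2nn : ∀ x ∈ Set.Ici (0 : ℝ), 0 ≤ ρ2 x)
    (hρ2lip : ∀ w w' : EuclideanSpace ℝ (Fin d), ‖w - w'‖ ≤ δ0 →
      ‖fderiv ℝ (fderiv ℝ F) w - fderiv ℝ (fderiv ℝ F) w'‖ ≤ ρ2 (F w) * ‖w - w'‖)
    (w0 : EuclideanSpace ℝ (Fin d)) (L1w0 L2w0 : ℝ)
    (hL1w0 : L1w0 = max (max 1 (sbRho0 ρ1 (F w0 + 1)))
      (max (sbRho0 ρ1 (F w0) * sbRho0 ρ1 (F w0 + 1)) (ρ1 (F w0 + 1))))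
    (hL2w0 : L2w0 = max (max 1 L1w0) (ρ2 (F w0 + 1))) :
    ∀ wt : EuclideanSpace ℝ (Fin d), F wt ≤ F w0 →
      ∀ u1 u2 : EuclideanSpace ℝ (Fin d),
        ‖u1 - wt‖ ≤ 1 / sbRho0 ρ1 (F w0 + 1) →
        ‖u2 - wt‖ ≤ 1 / sbRho0 ρ1 (F w0 + 1) →
        ‖fderiv ℝ (fderiv ℝ F) u1 - fderiv ℝ (fderiv ℝ F) u2‖ ≤ L2w0 * ‖u1 - u2‖ :=
  local_hessian_lipschitz_of_selfbounding_general d F hF hFnn ρ1 hρ1mono hρ1cont hρ1pos hρ1bound δ0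
    hδ0 ρ2 hρ2mono hρ2lip w0 L1w0 L2w0 hL2w0
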